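/- Let Γ = ⟨ρ_0, ..., ρ_{n-1}⟩ be a string C-group of rank n ≥ 1. Then the regular n-complex K(Γ) is an abstract polytope: for every pair of incident faces of ranks i-1 and i+1 there are exactly two i-faces between them. -/

import Mathlib

open Set Pointwise

/-- The distinguished subgroup `Γ_I = ⟨R_i : i ∈ I⟩` of a group with a system of
generating subgroups `R : ℤ → Subgroup G` (with the convention `Γ_∅ = R_{-1}`,
which is harmless for nonempty `I ⊆ {-1,…,n}` since `R_{-1}` is contained in
every `R_i`). -/
def GamI {G : Type*} [Group G] (R : ℤ → Subgroup G) (I : Set ℤ) : Subgroup G :=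
  R (-1) ⊔ ⨆ i ∈ I, R i

/-- `Γ_k^- = ⟨R_j : j ≤ k⟩`. -/
def Gminus {G : Type*} [Group G] (R : ℤ → Subgroup G) (k : ℤ) : Subgroup G :=
  GamI R (Set.Icc (-1) k)

/-- `Γ_k^+ = ⟨R_j : j ≥ k⟩`. -/
def Gplus {G : Type*} [Group G] (R : ℤ → Subgroup G) (n k : ℤ) : Subgroup G :=
  GamI R (Set.Icc k n)

/-- `Γ_i = ⟨R_j : j ≠ i⟩`. -/
def Gsub {G : Type*} [Group G] (R : ℤ → Subgroup G) (n i : ℤ) : Subgroup G :=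
  GamI R (Set.Icc (-1) n \ {i})

/-- A generalized string C-group of rank `n`: a group generated by subgroups
`R_{-1}, R_0, …, R_n` with `R_{-1} = R_n` a proper subgroup of each `R_i`
(`0 ≤ i ≤ n-1`), satisfying the intersection property and the commutation rules
`R_i R_j = R_j R_i` (as product sets) for non-adjacent indices. -/
structure GenStringC {G : Type*} [Group G] (n : ℤ) (R : ℤ → Subgroup G) : Prop where
  one_le_n : 1 ≤ n
  gen_top : GamI R (Set.Icc (-1) n) = ⊤
  ends_eq : R (-1) = R n
  ends_lt : ∀ i ∈ Set.Icc (0 : ℤ) (n - 1), R (-1) < R i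
  inter : ∀ I J : Set ℤ, I ⊆ Set.Icc (-1 : ℤ) n → J ⊆ Set.Icc (-1 : ℤ) n →
    GamI R I ⊓ GamI R J = GamI R (I ∩ J)
  comm : ∀ i j : ℤ, -1 ≤ i → i < j - 1 → j ≤ n →
    (↑(R i) : Set G) * ↑(R j) = (↑(R j) : Set G) * ↑(R i)

/-- The set of `i`-faces of `K(Γ)`: right cosets of `Γ_i = ⟨R_k : k ≠ i⟩`. -/
def Gface {G : Type*} [Group G] (n : ℤ) (R : ℤ → Subgroup G) (i : ℤ) :=
  Quotient (QuotientGroup.rightRel (Gsub R n i))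

/-- The faces of the complex `K(Γ)`: for each rank `i ∈ {-1,…,n}` the right
cosets `Γ_i φ`. -/
def KF {G : Type*} [Group G] (n : ℤ) (R : ℤ → Subgroup G) :=
  Σ i : ↥(Set.Icc (-1 : ℤ) n), Gface n R i.1

/-- The incidence relation of `K(Γ)`:
`Γ_i φ ≤ Γ_j ψ  iff  i ≤ j and φψ⁻¹ ∈ Γ_{i+1}^+ Γ_{j-1}^-`. -/
def KGle {G : Type*} [Group G] (n : ℤ) (R : ℤ → Subgroup G)
    (x y : KF n R) : Prop :=
  x.1.1 ≤ y.1.1 ∧ ∃ φ ψ : G,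
    x.2 = Quotient.mk (QuotientGroup.rightRel (Gsub R n x.1.1)) φ ∧
    y.2 = Quotient.mk (QuotientGroup.rightRel (Gsub R n y.1.1)) ψ ∧
    φ * ψ⁻¹ ∈ (↑(Gplus R n (x.1.1 + 1)) : Set G) * ↑(Gminus R (y.1.1 - 1))

/-- Right multiplication action of `Γ` on the faces of `K(Γ)`. -/
def rmulKF {G : Type*} [Group G] (n : ℤ) (R : ℤ → Subgroup G) (g : G)
    (x : KF n R) : KF n R :=
  ⟨x.1, Quotient.map (· * g)
    (fun a b h => by
      have h' : b * a⁻¹ ∈ Gsub R n x.1.1 :=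
        (QuotientGroup.rightRel_apply).1 h
      refine (QuotientGroup.rightRel_apply).2 ?_
      simpa [mul_assoc] using h') x.2⟩

/-- The distinguished generating subgroups associated with the involutory
generators of a string C-group: `R_i = ⟨ρ_i⟩` for `0 ≤ i ≤ n-1` and
`R_{-1} = R_n = {1}`. -/
def RofRho {G : Type*} [Group G] (n : ℤ) (ρ : ℤ → G) : ℤ → Subgroup G :=
  fun i => if 0 ≤ i ∧ i ≤ n - 1 then Subgroup.closure {ρ i} else ⊥

/-!
Two faces of `K(Γ)` are incident exactly when their cosets meet, so the given faces can be
written `Γ_i g` and `Γ_{i+2} g`. The commutation relations give the factorisations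
`Γ_k = Γ_{k-1}^- Γ_{k+1}^+ = Γ_{k+1}^+ Γ_{k-1}^-`. If `Γ_{i+1} h` lies between the two faces,
then `h g⁻¹ ∈ Γ_i ∩ Γ_{i+1} Γ_{i+2}`, and factorising each piece shows that `h g⁻¹` is, modulo
`Γ_{i+1}`, an element of `Γ_{i+1}^- ∩ Γ_{i+1}^+ = ⟨ρ_{i+1}⟩ = {1, ρ_{i+1}}` (intersection
property). The two faces `Γ_{i+1} g` and `Γ_{i+1} ρ_{i+1} g` differ since
`ρ_{i+1} ∉ Γ_{i+1}`, once more by the intersection property.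
-/

section Incidence

variable {G : Type*} [Group G] {R : ℤ → Subgroup G} {n : ℤ}

lemma GamI_mono {I J : Set ℤ} (h : I ⊆ J) : GamI R I ≤ GamI R J :=
  sup_le_sup_left (biSup_mono h) _

lemma GamI_union (I J : Set ℤ) : GamI R (I ∪ J) = GamI R I ⊔ GamI R J := by
  simp only [GamI, iSup_union]
  rw [sup_sup_distrib_left]

lemma Gminus_le_Gsub {k t : ℤ} (hkt : k < t) (ht : t ≤ n) : Gminus R k ≤ Gsub R n t :=
  GamI_mono fun a ha => by simp only [mem_Icc, mem_sdiff, mem_singleton_iff] at ha ⊢; omega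

lemma Gplus_le_Gsub {k t : ℤ} (htk : t < k) (ht : -1 ≤ t) : Gplus R n k ≤ Gsub R n t :=
  GamI_mono fun a ha => by simp only [mem_Icc, mem_sdiff, mem_singleton_iff] at ha ⊢; omega

lemma Gminus_mono : Monotone (Gminus R) :=
  fun _ _ hkl => GamI_mono (Icc_subset_Icc_right hkl)

lemma Gplus_antitone : Antitone (Gplus R n) :=
  fun _ _ hkl => GamI_mono (Icc_subset_Icc_left hkl)

lemma Gsub_eq_Gminus_sup_Gplus {t : ℤ} (ht : t ∈ Icc (-1) n) :
    Gsub R n t = Gminus R (t - 1) ⊔ Gplus R n (t + 1) := by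
  rw [Gminus, Gplus, ← GamI_union, Gsub]
  congr 1
  ext a
  simp only [mem_Icc, mem_sdiff, mem_singleton_iff, mem_union] at ht ⊢
  omega

lemma mk_eq_mk_iff {H : Subgroup G} {a b : G} :
    Quotient.mk (QuotientGroup.rightRel H) a = Quotient.mk _ b ↔ b * a⁻¹ ∈ H :=
  Quotient.eq.trans QuotientGroup.rightRel_apply

theorem KGle_iff {x y : KF n R} :
    KGle n R x y ↔ x.1.1 ≤ y.1.1 ∧ ∃ g : G,
      x.2 = Quotient.mk (QuotientGroup.rightRel (Gsub R n x.1.1)) g ∧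
      y.2 = Quotient.mk (QuotientGroup.rightRel (Gsub R n y.1.1)) g := by
  refine ⟨fun ⟨hle, φ, ψ, hφ, hψ, a, ha, b, hb, hab⟩ => ⟨hle, a⁻¹ * φ, ?_, ?_⟩,
    fun ⟨hle, g, hx, hy⟩ => ⟨hle, g, g, hx, hy, 1, one_mem _, 1, one_mem _, by simp⟩⟩
  · rw [hφ]
    refine mk_eq_mk_iff.2 ?_
    rw [mul_inv_cancel_right]
    exact inv_mem (Gplus_le_Gsub (lt_add_one _) x.1.2.1 ha)
  · have hg : a⁻¹ * φ = b * ψ := by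
      rw [inv_mul_eq_iff_eq_mul, ← mul_assoc, show a * b = φ * ψ⁻¹ from hab,
        inv_mul_cancel_right]
    rw [hψ, hg]
    refine mk_eq_mk_iff.2 ?_
    rw [mul_inv_cancel_right]
    exact Gminus_le_Gsub (sub_one_lt _) y.1.2.2 hb

def KF.coset (i : Icc (-1 : ℤ) n) (g : G) : KF n R :=
  ⟨i, Quotient.mk (QuotientGroup.rightRel (Gsub R n i)) g⟩

lemma KF.coset_eq_coset_iff {i : Icc (-1 : ℤ) n} {a b : G} :
    (KF.coset i a : KF n R) = KF.coset i b ↔ a * b⁻¹ ∈ Gsub R n i := by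
  rw [← inv_mem_iff, mul_inv_rev, inv_inv]
  exact ⟨fun h => mk_eq_mk_iff.1 (eq_of_heq (Sigma.mk.inj h).2),
    fun h => congrArg (Sigma.mk i) (mk_eq_mk_iff.2 h)⟩

lemma KGle_coset_iff {i j : Icc (-1 : ℤ) n} {a b : G} :
    KGle n R (KF.coset i a) (KF.coset j b) ↔
      i.1 ≤ j.1 ∧ ∃ g : G, g * a⁻¹ ∈ Gsub R n i ∧ g * b⁻¹ ∈ Gsub R n j :=
  KGle_iff.trans (and_congr_right' (exists_congr fun _ => and_congr mk_eq_mk_iff mk_eq_mk_iff))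

end Incidence

lemma commute_of_mul_self_eq_one {G : Type*} [Group G] {u v : G} (hu : u * u = 1)
    (hv : v * v = 1) (huv : (u * v) ^ 2 = 1) : Commute u v :=
  calc u * v = (u * v)⁻¹ := eq_inv_of_mul_eq_one_left (by rwa [sq] at huv)
    _ = v * u := by rw [mul_inv_rev, inv_eq_of_mul_eq_one_right hu,
      inv_eq_of_mul_eq_one_right hv]

lemma mem_pair_of_mem_closure_singleton {G : Type*} [Group G] {r x : G} (hr : r * r = 1)
    (hx : x ∈ Subgroup.closure {r}) : x ∈ ({1, r} : Set G) := by
  obtain ⟨k, rfl⟩ := Subgroup.mem_closure_singleton.1 hx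
  have hr2 : r ^ (2 : ℤ) = 1 := by rw [zpow_two, hr]
  rcases Int.even_or_odd' k with ⟨m, rfl | rfl⟩
  · left; rw [zpow_mul, hr2, one_zpow]
  · right; rw [zpow_add_one, zpow_mul, hr2, one_zpow, one_mul]; exact mem_singleton r

section StringCGroup

variable {G : Type*} [Group G] {n : ℤ} {ρ : ℤ → G}

lemma GamI_RofRho (I : Set ℤ) :
    GamI (RofRho n ρ) I = Subgroup.closure (ρ '' (I ∩ Icc 0 (n - 1))) := by
  rw [GamI, show RofRho n ρ (-1) = ⊥ from if_neg (by omega), bot_sup_eq]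
  refine le_antisymm (iSup₂_le fun i hi => ?_) ((Subgroup.closure_le _).2 ?_)
  · unfold RofRho
    split_ifs with hiK
    · exact Subgroup.closure_mono (singleton_subset_iff.2 ⟨i, ⟨hi, hiK⟩, rfl⟩)
    · exact bot_le
  · rintro _ ⟨i, ⟨hi, hiK⟩, rfl⟩
    refine le_iSup₂ (f := fun i (_ : i ∈ I) => RofRho n ρ i) i hi ?_
    rw [RofRho, if_pos (show 0 ≤ i ∧ i ≤ n - 1 from hiK)]
    exact Subgroup.subset_closure rfl

lemma GamI_RofRho_singleton {k : ℤ} (hk : k ∈ Icc 0 (n - 1)) :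
    GamI (RofRho n ρ) {k} = Subgroup.closure {ρ k} := by
  rw [GamI_RofRho, singleton_inter_of_mem hk, image_singleton]

lemma GamI_RofRho_inf
    (hint : ∀ I J : Set ℤ, I ⊆ Icc 0 (n - 1) → J ⊆ Icc 0 (n - 1) →
      Subgroup.closure (ρ '' I) ⊓ Subgroup.closure (ρ '' J) = Subgroup.closure (ρ '' (I ∩ J)))
    (I J : Set ℤ) :
    GamI (RofRho n ρ) I ⊓ GamI (RofRho n ρ) J = GamI (RofRho n ρ) (I ∩ J) := by
  simp only [GamI_RofRho]
  rw [hint _ _ inter_subset_right inter_subset_right, ← inter_inter_distrib_right]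

lemma GamI_RofRho_le_centralizer (hinv : ∀ i ∈ Icc 0 (n - 1), ρ i * ρ i = 1)
    (hcomm : ∀ i j : ℤ, 0 ≤ i → i < j - 1 → j ≤ n - 1 → (ρ i * ρ j) ^ 2 = 1)
    {I J : Set ℤ} (hIJ : ∀ a ∈ I, ∀ b ∈ J, a < b - 1) :
    GamI (RofRho n ρ) I ≤ Subgroup.centralizer (GamI (RofRho n ρ) J) := by
  rw [GamI_RofRho, GamI_RofRho, Subgroup.centralizer_closure, Subgroup.closure_le]
  rintro _ ⟨a, ⟨ha, haK⟩, rfl⟩ _ ⟨b, ⟨hb, hbK⟩, rfl⟩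
  exact (commute_of_mul_self_eq_one (hinv a haK) (hinv b hbK)
    (hcomm a b haK.1 (hIJ a ha b hb) hbK.2)).eq.symm

lemma Gminus_le_centralizer_Gplus (hinv : ∀ i ∈ Icc 0 (n - 1), ρ i * ρ i = 1)
    (hcomm : ∀ i j : ℤ, 0 ≤ i → i < j - 1 → j ≤ n - 1 → (ρ i * ρ j) ^ 2 = 1)
    {k l : ℤ} (hkl : k + 1 < l) :
    Gminus (RofRho n ρ) k ≤ Subgroup.centralizer (Gplus (RofRho n ρ) n l) :=
  GamI_RofRho_le_centralizer hinv hcomm fun a ha b hb => by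
    simp only [mem_Icc] at ha hb; omega

lemma coe_Gsub_eq_Gminus_mul_Gplus (hinv : ∀ i ∈ Icc 0 (n - 1), ρ i * ρ i = 1)
    (hcomm : ∀ i j : ℤ, 0 ≤ i → i < j - 1 → j ≤ n - 1 → (ρ i * ρ j) ^ 2 = 1)
    {t : ℤ} (ht : t ∈ Icc (-1) n) :
    (Gsub (RofRho n ρ) n t : Set G) =
      Gminus (RofRho n ρ) (t - 1) * Gplus (RofRho n ρ) n (t + 1) := by
  rw [Gsub_eq_Gminus_sup_Gplus ht]
  exact Subgroup.coe_mul_of_left_le_normalizer_right _ _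
    ((Gminus_le_centralizer_Gplus hinv hcomm (by omega)).trans
      (Subgroup.centralizer_le_normalizer _))

lemma coe_Gsub_eq_Gplus_mul_Gminus (hinv : ∀ i ∈ Icc 0 (n - 1), ρ i * ρ i = 1)
    (hcomm : ∀ i j : ℤ, 0 ≤ i → i < j - 1 → j ≤ n - 1 → (ρ i * ρ j) ^ 2 = 1)
    {t : ℤ} (ht : t ∈ Icc (-1) n) :
    (Gsub (RofRho n ρ) n t : Set G) =
      Gplus (RofRho n ρ) n (t + 1) * Gminus (RofRho n ρ) (t - 1) := by
  rw [Gsub_eq_Gminus_sup_Gplus ht, sup_comm]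
  exact Subgroup.coe_mul_of_left_le_normalizer_right _ _
    ((Subgroup.le_centralizer_iff.1 (Gminus_le_centralizer_Gplus hinv hcomm (by omega))).trans
      (Subgroup.centralizer_le_normalizer _))

lemma Gminus_inf_Gplus
    (hint : ∀ I J : Set ℤ, I ⊆ Icc 0 (n - 1) → J ⊆ Icc 0 (n - 1) →
      Subgroup.closure (ρ '' I) ⊓ Subgroup.closure (ρ '' J) = Subgroup.closure (ρ '' (I ∩ J)))
    {k : ℤ} (hk : k ∈ Icc 0 (n - 1)) :
    Gminus (RofRho n ρ) k ⊓ Gplus (RofRho n ρ) n k = Subgroup.closure {ρ k} := by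
  rw [Gminus, Gplus, GamI_RofRho_inf hint, ← GamI_RofRho_singleton hk]
  congr 1
  ext a
  simp only [mem_inter_iff, mem_Icc, mem_singleton_iff] at hk ⊢
  omega

lemma rho_mem_Gsub {k t : ℤ} (hk : k ∈ Icc 0 (n - 1)) (hkt : k ≠ t) :
    ρ k ∈ Gsub (RofRho n ρ) n t := by
  rw [Gsub, GamI_RofRho]
  refine Subgroup.subset_closure ⟨k, ⟨⟨⟨?_, ?_⟩, hkt⟩, hk⟩, rfl⟩ <;>
    linarith [hk.1, hk.2]

lemma rho_notMem_Gsub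
    (hint : ∀ I J : Set ℤ, I ⊆ Icc 0 (n - 1) → J ⊆ Icc 0 (n - 1) →
      Subgroup.closure (ρ '' I) ⊓ Subgroup.closure (ρ '' J) = Subgroup.closure (ρ '' (I ∩ J)))
    {k : ℤ} (hk : k ∈ Icc 0 (n - 1)) (hρ : ρ k ≠ 1) : ρ k ∉ Gsub (RofRho n ρ) n k := by
  intro h
  have h' : ρ k ∈ GamI (RofRho n ρ) {k} ⊓ Gsub (RofRho n ρ) n k := by
    refine ⟨?_, h⟩
    rw [GamI_RofRho_singleton hk]
    exact Subgroup.subset_closure rfl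
  rw [Gsub, GamI_RofRho_inf hint, singleton_inter_eq_empty.2 fun h => h.2 rfl, GamI_RofRho,
    empty_inter, image_empty, Subgroup.closure_empty] at h'
  exact hρ h'

lemma exists_mul_inv_mem_Gsub (hinv : ∀ i ∈ Icc 0 (n - 1), ρ i * ρ i = 1)
    (hcomm : ∀ i j : ℤ, 0 ≤ i → i < j - 1 → j ≤ n - 1 → (ρ i * ρ j) ^ 2 = 1)
    (hint : ∀ I J : Set ℤ, I ⊆ Icc 0 (n - 1) → J ⊆ Icc 0 (n - 1) →
      Subgroup.closure (ρ '' I) ⊓ Subgroup.closure (ρ '' J) = Subgroup.closure (ρ '' (I ∩ J)))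
    {i : ℤ} (hi : -1 ≤ i) (hin : i + 2 ≤ n) {s t : G}
    (hs : s ∈ Gsub (RofRho n ρ) n i) (ht : t ∈ Gsub (RofRho n ρ) n (i + 2))
    (hst : s * t⁻¹ ∈ Gsub (RofRho n ρ) n (i + 1)) :
    ∃ d ∈ ({1, ρ (i + 1)} : Set G), s * d⁻¹ ∈ Gsub (RofRho n ρ) n (i + 1) := by
  have hk : i + 1 ∈ Icc 0 (n - 1) := ⟨by omega, by omega⟩
  obtain ⟨u, hu, v, hv, rfl⟩ :=
    Set.mem_mul.1 ((coe_Gsub_eq_Gminus_mul_Gplus hinv hcomm ⟨hi, by omega⟩).subset hs)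
  obtain ⟨w, hw, c, hc, rfl⟩ :=
    Set.mem_mul.1 ((coe_Gsub_eq_Gplus_mul_Gminus hinv hcomm ⟨by omega, hin⟩).subset ht)
  have hvc : v * c⁻¹ ∈ Gsub (RofRho n ρ) n (i + 1) := by
    rw [show v * c⁻¹ = u⁻¹ * (u * v * (w * c)⁻¹) * w by group]
    exact mul_mem (mul_mem (inv_mem (Gminus_le_Gsub (by omega) (by omega) hu)) hst)
      (Gplus_le_Gsub (by omega) (by omega) hw)
  obtain ⟨q, hq, p, hp, hqp⟩ :=
    Set.mem_mul.1 ((coe_Gsub_eq_Gplus_mul_Gminus hinv hcomm ⟨by omega, by omega⟩).subset hvc)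
  have hd : q⁻¹ * v ∈ Subgroup.closure {ρ (i + 1)} := by
    rw [← Gminus_inf_Gplus hint hk]
    refine Subgroup.mem_inf.2 ⟨?_, mul_mem (inv_mem (Gplus_antitone (by omega) hq)) hv⟩
    rw [show q⁻¹ * v = p * c by rw [inv_mul_eq_iff_eq_mul, ← mul_assoc, hqp,
      inv_mul_cancel_right]]
    exact mul_mem (Gminus_mono (by omega) hp) (Gminus_mono (by omega) hc)
  refine ⟨q⁻¹ * v, mem_pair_of_mem_closure_singleton (hinv _ hk) hd, ?_⟩
  rw [show u * v * (q⁻¹ * v)⁻¹ = u * q by group]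
  exact mul_mem (Gminus_le_Gsub (by omega) (by omega) hu) (Gplus_le_Gsub (by omega) (by omega) hq)

theorem setOf_KGle_between_eq_pair
    (hinv : ∀ i ∈ Icc 0 (n - 1), ρ i * ρ i = 1)
    (hcomm : ∀ i j : ℤ, 0 ≤ i → i < j - 1 → j ≤ n - 1 → (ρ i * ρ j) ^ 2 = 1)
    (hint : ∀ I J : Set ℤ, I ⊆ Icc 0 (n - 1) → J ⊆ Icc 0 (n - 1) →
      Subgroup.closure (ρ '' I) ⊓ Subgroup.closure (ρ '' J) = Subgroup.closure (ρ '' (I ∩ J)))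
    {i : ℤ} (hi : i ∈ Icc (-1) n) (hm : i + 1 ∈ Icc (-1) n) (hj : i + 2 ∈ Icc (-1) n) (g : G) :
    {z : KF n (RofRho n ρ) | z.1.1 = i + 1 ∧ KGle n _ (KF.coset ⟨i, hi⟩ g) z ∧
      KGle n _ z (KF.coset ⟨i + 2, hj⟩ g)} =
      {KF.coset ⟨i + 1, hm⟩ g, KF.coset ⟨i + 1, hm⟩ (ρ (i + 1) * g)} := by
  have hk : i + 1 ∈ Icc 0 (n - 1) := ⟨by linarith [hi.1], by linarith [hj.2]⟩
  ext z
  constructor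
  · rintro ⟨hz, hxz, hzy⟩
    obtain ⟨⟨r, hr⟩, f⟩ := z
    obtain ⟨h, rfl⟩ := Quotient.exists_rep f
    obtain rfl : r = i + 1 := hz
    obtain ⟨-, a, ha, hah⟩ := KGle_coset_iff.1 hxz
    obtain ⟨-, b, hbh, hb⟩ := KGle_coset_iff.1 hzy
    have hab : a * g⁻¹ * (b * g⁻¹)⁻¹ ∈ Gsub (RofRho n ρ) n (i + 1) := by
      rw [show a * g⁻¹ * (b * g⁻¹)⁻¹ = a * h⁻¹ * (b * h⁻¹)⁻¹ by group]
      exact mul_mem hah (inv_mem hbh)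
    obtain ⟨d, hd, hmem⟩ := exists_mul_inv_mem_Gsub hinv hcomm hint hi.1 hj.2 ha hb hab
    have hdh : h * (d * g)⁻¹ ∈ Gsub (RofRho n ρ) n (i + 1) := by
      rw [show h * (d * g)⁻¹ = (a * h⁻¹)⁻¹ * (a * g⁻¹ * d⁻¹) by group]
      exact mul_mem (inv_mem hah) hmem
    rcases hd with rfl | rfl
    · exact Or.inl (KF.coset_eq_coset_iff.2 (by simpa using hdh))
    · exact Or.inr (KF.coset_eq_coset_iff.2 hdh)
  · have hρi : ρ (i + 1) ∈ Gsub (RofRho n ρ) n i := rho_mem_Gsub hk (by omega)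
    have hρj : ρ (i + 1) ∈ Gsub (RofRho n ρ) n (i + 2) := rho_mem_Gsub hk (by omega)
    rintro (rfl | rfl)
    · exact ⟨rfl, KGle_coset_iff.2 ⟨by simp, g, by simp, by simp⟩,
        KGle_coset_iff.2 ⟨by simp, g, by simp, by simp⟩⟩
    · exact ⟨rfl, KGle_coset_iff.2 ⟨by simp, ρ (i + 1) * g, by simpa using hρi, by simp⟩,
        KGle_coset_iff.2 ⟨by simp, ρ (i + 1) * g, by simp, by simpa using hρj⟩⟩

end StringCGroup

theorem string_cgroup_gives_polytope_general {G : Type*} [Group G]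
    (n : ℤ) (ρ : ℤ → G)
    (hinv : ∀ i ∈ Set.Icc (0 : ℤ) (n - 1), ρ i * ρ i = 1 ∧ ρ i ≠ 1)
    (hcomm : ∀ i j : ℤ, 0 ≤ i → i < j - 1 → j ≤ n - 1 → (ρ i * ρ j) ^ 2 = 1)
    (hint : ∀ I J : Set ℤ, I ⊆ Set.Icc (0 : ℤ) (n - 1) →
      J ⊆ Set.Icc (0 : ℤ) (n - 1) →
      Subgroup.closure (ρ '' I) ⊓ Subgroup.closure (ρ '' J) =
        Subgroup.closure (ρ '' (I ∩ J))) :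
    ∀ x y : KF n (RofRho n ρ), KGle n (RofRho n ρ) x y →
      y.1.1 = x.1.1 + 2 →
      {z : KF n (RofRho n ρ) | z.1.1 = x.1.1 + 1 ∧
        KGle n (RofRho n ρ) x z ∧ KGle n (RofRho n ρ) z y}.ncard = 2 := by
  rintro ⟨⟨i, hi⟩, fx⟩ ⟨⟨j, hj⟩, fy⟩ hxy (hij : j = i + 2)
  subst hij
  obtain ⟨-, g, hgx, hgy⟩ := KGle_iff.1 hxy
  obtain rfl : fx = Quotient.mk (QuotientGroup.rightRel (Gsub (RofRho n ρ) n i)) g := hgx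
  obtain rfl : fy = Quotient.mk (QuotientGroup.rightRel (Gsub (RofRho n ρ) n (i + 2))) g := hgy
  have hm : i + 1 ∈ Icc (-1) n := ⟨by linarith [hi.1], by linarith [hj.2]⟩
  have hk : i + 1 ∈ Icc 0 (n - 1) := ⟨by linarith [hi.1], by linarith [hj.2]⟩
  refine (congrArg ncard (setOf_KGle_between_eq_pair (fun i hi => (hinv i hi).1) hcomm hint
    hi hm hj g)).trans (ncard_pair (Ne.symm fun h => ?_))
  rw [KF.coset_eq_coset_iff, mul_inv_cancel_right] at h
  exact rho_notMem_Gsub hint hk (hinv _ hk).2 h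

/-- for a string C-group `Γ = ⟨ρ_0,…,ρ_{n-1}⟩`, the regular
`n`-complex `K(Γ)` is an abstract polytope: between incident faces of ranks
`i-1` and `i+1` there are exactly two `i`-faces. -/
theorem string_cgroup_gives_polytope {G : Type*} [Group G]
    (n : ℤ) (hn : 1 ≤ n) (ρ : ℤ → G)
    (hinv : ∀ i ∈ Set.Icc (0 : ℤ) (n - 1), ρ i * ρ i = 1 ∧ ρ i ≠ 1)
    (hcomm : ∀ i j : ℤ, 0 ≤ i → i < j - 1 → j ≤ n - 1 → (ρ i * ρ j) ^ 2 = 1)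
    (hint : ∀ I J : Set ℤ, I ⊆ Set.Icc (0 : ℤ) (n - 1) →
      J ⊆ Set.Icc (0 : ℤ) (n - 1) →
      Subgroup.closure (ρ '' I) ⊓ Subgroup.closure (ρ '' J) =
        Subgroup.closure (ρ '' (I ∩ J)))
    (hgen : Subgroup.closure (ρ '' Set.Icc (0 : ℤ) (n - 1)) = ⊤) :
    ∀ x y : KF n (RofRho n ρ), KGle n (RofRho n ρ) x y →
      y.1.1 = x.1.1 + 2 →
      {z : KF n (RofRho n ρ) | z.1.1 = x.1.1 + 1 ∧
        KGle n (RofRho n ρ) x z ∧ KGle n (RofRho n ρ) z y}.ncard = 2 :=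
  string_cgroup_gives_polytope_general n ρ hinv hcomm hint
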